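/- Let G and G' be signed graphs where G' is obtained from G by uncontracting at a vertex v with a pair of edges {e,f} (adding a new vertex v' and a positive edge vv'). If G' is A-connected for an abelian group A, then G is A-connected. -/
import Mathlib


/-- A signed multigraph; `sign e = true` means positive, `false` negative. -/
structure SignedMultigraph (V E : Type*) where
  fst : E → V
  snd : E → V
  sign : E → Bool

namespace SignedMultigraph

variable {V E : Type*}

/-- An orientation: a value `±1` for each half-edge, with opposite values on a
positive edge and equal values on a negative edge. -/
structure Orientation (G : SignedMultigraph V E) where
  τ₁ : E → ℤ
  τ₂ : E → ℤ
  τ₁_mem : ∀ e, τ₁ e = 1 ∨ τ₁ e = -1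
  τ₂_mem : ∀ e, τ₂ e = 1 ∨ τ₂ e = -1
  pos_compat : ∀ e, G.sign e = true → τ₂ e = - τ₁ e
  neg_compat : ∀ e, G.sign e = false → τ₂ e = τ₁ e

/-- The boundary `∂f(v) = Σ_{half-edges h at v} τ(h) f(e_h)`. -/
def boundary {A : Type*} [Fintype E] [DecidableEq V] [AddCommGroup A]
    (G : SignedMultigraph V E) (τ : G.Orientation) (f : E → A) (v : V) : A :=
  ∑ e, ((if G.fst e = v then τ.τ₁ e else 0) + (if G.snd e = v then τ.τ₂ e else 0)) • f e

/-- `G` is `A`-connected: every `A`-boundary `β` (a map with `Σ β(v) = a + a`)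
is satisfied by a nowhere-zero `f` under some orientation. -/
def IsAConnected (G : SignedMultigraph V E) (A : Type*)
    [Fintype V] [Fintype E] [DecidableEq V] [AddCommGroup A] : Prop :=
  ∀ β : V → A, (∃ a : A, ∑ v, β v = a + a) →
    ∃ (τ : G.Orientation) (f : E → A), (∀ e, f e ≠ 0) ∧ ∀ v, G.boundary τ f v = β v

/-- Uncontracting at `v` with `{e, f}`: add a new vertex `v'` (here `none`),
reattach the `v`-endpoint of each of `e` and `f` at `v'`, and add a new
positive edge `v v'` (here the edge `none`). -/
def uncontractAt [DecidableEq V] [DecidableEq E] (G : SignedMultigraph V E)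
    (v : V) (e f : E) : SignedMultigraph (Option V) (Option E) where
  fst := fun g => match g with
    | none => some v
    | some g => if (g = e ∨ g = f) ∧ G.fst g = v then none else some (G.fst g)
  snd := fun g => match g with
    | none => none
    | some g => if (g = e ∨ g = f) ∧ G.fst g ≠ v ∧ G.snd g = v then none
                else some (G.snd g)
  sign := fun g => match g with
    | none => true
    | some g => G.sign g

end SignedMultigraph


section Aux
variable {V E : Type*} [DecidableEq V] [DecidableEq E]
  (G : SignedMultigraph V E) (v : V) (e f : E)

lemma uncontract_fst_some (g : E) :
    (G.uncontractAt v e f).fst (some g) =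
      if (g = e ∨ g = f) ∧ G.fst g = v then none else some (G.fst g) := rfl

lemma uncontract_snd_some (g : E) :
    (G.uncontractAt v e f).snd (some g) =
      if (g = e ∨ g = f) ∧ G.fst g ≠ v ∧ G.snd g = v then none
      else some (G.snd g) := rfl

lemma uncontract_fst_none :
    (G.uncontractAt v e f).fst none = some v := rfl

lemma uncontract_snd_none :
    (G.uncontractAt v e f).snd none = none := rfl

lemma coeff_split (g : E) (t1 t2 : ℤ) :
    ((if G.fst g = v then t1 else 0) + (if G.snd g = v then t2 else 0)) =
      (((if (G.uncontractAt v e f).fst (some g) = some v then t1 else 0) +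
        (if (G.uncontractAt v e f).snd (some g) = some v then t2 else 0)) +
       ((if (G.uncontractAt v e f).fst (some g) = none then t1 else 0) +
        (if (G.uncontractAt v e f).snd (some g) = none then t2 else 0))) := by
  rw [uncontract_fst_some, uncontract_snd_some]
  split_ifs with h1 h2 h2 <;> simp_all <;> abel

lemma coeff_ne {w : V} (hw : w ≠ v) (g : E) (t1 t2 : ℤ) :
    ((if G.fst g = w then t1 else 0) + (if G.snd g = w then t2 else 0)) =
      ((if (G.uncontractAt v e f).fst (some g) = some w then t1 else 0) +
       (if (G.uncontractAt v e f).snd (some g) = some w then t2 else 0)) := by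
  rw [uncontract_fst_some, uncontract_snd_some]
  split_ifs with h1 h2 h2 <;> simp_all

end Aux

set_option maxHeartbeats 1000000 in
/-- if the signed graph `G'` obtained from `G` by uncontracting at
a vertex `v` with a pair of edges `{e, f}` is `A`-connected, then so is `G`. -/
theorem isAConnected_of_uncontract {V E A : Type*} [Fintype V] [Fintype E]
    [DecidableEq V] [DecidableEq E] [AddCommGroup A]
    (G : SignedMultigraph V E) (v : V) (e f : E)
    (h : (G.uncontractAt v e f).IsAConnected A) :
    G.IsAConnected A := by
  intro β hβ
  obtain ⟨a, ha⟩ := hβ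
  obtain ⟨τ', f', hnz, hb⟩ := h (fun w => w.elim 0 β) ⟨a, by
    rw [Fintype.sum_option]; simpa using ha⟩
  refine ⟨⟨fun g => τ'.τ₁ (some g), fun g => τ'.τ₂ (some g),
    fun g => τ'.τ₁_mem _, fun g => τ'.τ₂_mem _,
    fun g hg => τ'.pos_compat (some g) hg,
    fun g hg => τ'.neg_compat (some g) hg⟩, fun g => f' (some g),
    fun g => hnz _, ?_⟩
  intro w
  by_cases hw : w = v
  · subst hw
    have h1 := hb (some w)
    have h2 := hb none
    simp only [SignedMultigraph.boundary, Option.elim] at h1 h2 ⊢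
    rw [Fintype.sum_option] at h1 h2
    have hnone : τ'.τ₂ none = - τ'.τ₁ none := τ'.pos_compat none rfl
    have key : ∀ g : E,
        ((if G.fst g = w then τ'.τ₁ (some g) else 0) +
          (if G.snd g = w then τ'.τ₂ (some g) else 0)) • f' (some g) =
        (((if (G.uncontractAt w e f).fst (some g) = some w then τ'.τ₁ (some g) else 0) +
          (if (G.uncontractAt w e f).snd (some g) = some w then τ'.τ₂ (some g) else 0)) • f' (some g)) +
        (((if (G.uncontractAt w e f).fst (some g) = none then τ'.τ₁ (some g) else 0) +
          (if (G.uncontractAt w e f).snd (some g) = none then τ'.τ₂ (some g) else 0)) • f' (some g)) := by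
      intro g
      rw [← add_smul]
      congr 1
      exact coeff_split G w e f g _ _
    calc (∑ g : E, ((if G.fst g = w then τ'.τ₁ (some g) else 0) +
          (if G.snd g = w then τ'.τ₂ (some g) else 0)) • f' (some g))
        = (∑ g : E, (((if (G.uncontractAt w e f).fst (some g) = some w then τ'.τ₁ (some g) else 0) +
          (if (G.uncontractAt w e f).snd (some g) = some w then τ'.τ₂ (some g) else 0)) • f' (some g)))
          + (∑ g : E, (((if (G.uncontractAt w e f).fst (some g) = none then τ'.τ₁ (some g) else 0) +
          (if (G.uncontractAt w e f).snd (some g) = none then τ'.τ₂ (some g) else 0)) • f' (some g))) := by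
          rw [← Finset.sum_add_distrib]
          exact Finset.sum_congr rfl fun g _ => key g
      _ = β w := by
          have e1 : (((if (G.uncontractAt w e f).fst none = some w then τ'.τ₁ none else 0) +
              (if (G.uncontractAt w e f).snd none = some w then τ'.τ₂ none else 0)) • f' none)
              + (((if (G.uncontractAt w e f).fst none = none then τ'.τ₁ none else 0) +
              (if (G.uncontractAt w e f).snd none = none then τ'.τ₂ none else 0)) • f' none) = 0 := by
            rw [uncontract_fst_none, uncontract_snd_none]
            simp [hnone, ← add_smul]
          have := congrArg₂ (· + ·) h1 h2
          simp only [add_zero] at this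
          rw [← this]
          rw [add_add_add_comm, e1, zero_add]
  · have h1 := hb (some w)
    simp only [SignedMultigraph.boundary, Option.elim] at h1 ⊢
    rw [Fintype.sum_option] at h1
    have hz : (((if (G.uncontractAt v e f).fst none = some w then τ'.τ₁ none else 0) +
        (if (G.uncontractAt v e f).snd none = some w then τ'.τ₂ none else 0)) • f' none) = 0 := by
      rw [uncontract_fst_none, uncontract_snd_none]
      have hvw : (some v : Option V) ≠ some w := by
        simp only [ne_eq, Option.some.injEq]
        exact fun hh => hw hh.symm
      simp [hvw]
    rw [hz, zero_add] at h1
    rw [← h1]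
    refine Finset.sum_congr rfl fun g _ => ?_
    congr 1
    exact coeff_ne G v e f hw g _ _
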